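/- arXiv:2006.04104 — 4 statements merged into one kernel-verified Lean document; each statement's English description precedes it below -/
import Mathlib

section
/- Let ω be a weakly non-degenerate skew-symmetric bilinear form on E, ω' a skew-symmetric bilinear form on E', and ℓ : E → E' a weak isometry between ω and ω'. Then the kernel of the pullback form ℓ*ω' (i.e., the set of u with ω'(ℓ(u), ℓ(v)) = 0 for all v ∈ E) equals ker ℓ. -/
/-! The decomposition `u = k + w` with `k ∈ ker ℓ`, `w ∈ (ker ℓ)^⊥` gives `ℓ u = ℓ w`, so by the
isometry property `ω w` vanishes on `(ker ℓ)^⊥`; it vanishes on `ker ℓ` by the definition of the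
orthogonal, hence on `ker ℓ ⊕ (ker ℓ)^⊥ = E`, and weak non-degeneracy forces `w = 0`. -/

def sympOrth {E : Type*} [AddCommGroup E] [Module ℝ E]
    (ω : E →ₗ[ℝ] E →ₗ[ℝ] ℝ) (K : Submodule ℝ E) : Submodule ℝ E where
  carrier := {x | ∀ y ∈ K, ω x y = 0}
  add_mem' := by
    intro a b ha hb y hy
    simp [ha y hy, hb y hy]
  zero_mem' := by
    intro y hy
    simp
  smul_mem' := by
    intro c a ha y hy
    simp [ha y hy]

section

variable {E F : Type*} [AddCommGroup E] [Module ℝ E] [AddCommGroup F] [Module ℝ F]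
  {ω : E →ₗ[ℝ] E →ₗ[ℝ] ℝ}

theorem eq_zero_of_mem_sympOrth_of_forall_sympOrth (hnd : ∀ u : E, (∀ v : E, ω u v = 0) → u = 0)
    {K : Submodule ℝ E} (hsum : K ⊔ sympOrth ω K = ⊤) {w : E} (hw : w ∈ sympOrth ω K)
    (h : ∀ v ∈ sympOrth ω K, ω w v = 0) : w = 0 := by
  refine hnd w fun v => ?_
  obtain ⟨k, hk, v', hv', rfl⟩ := Submodule.mem_sup.mp (hsum ▸ Submodule.mem_top : v ∈ K ⊔ _)
  rw [map_add, hw k hk, h v' hv', add_zero]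

theorem mem_ker_of_forall_pullback_eq_zero (hnd : ∀ u : E, (∀ v : E, ω u v = 0) → u = 0)
    (ℓ : E →ₗ[ℝ] F) (ω' : F →ₗ[ℝ] F →ₗ[ℝ] ℝ)
    (hiso : ∀ u ∈ sympOrth ω (LinearMap.ker ℓ), ∀ v ∈ sympOrth ω (LinearMap.ker ℓ),
      ω' (ℓ u) (ℓ v) = ω u v)
    (hsum : LinearMap.ker ℓ ⊔ sympOrth ω (LinearMap.ker ℓ) = ⊤) {u : E}
    (h : ∀ v : E, ω' (ℓ u) (ℓ v) = 0) : u ∈ LinearMap.ker ℓ := by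
  obtain ⟨k, hk, w, hw, rfl⟩ := Submodule.mem_sup.mp (hsum ▸ Submodule.mem_top : u ∈ _ ⊔ _)
  have hℓ : ℓ (k + w) = ℓ w := by rw [map_add, LinearMap.mem_ker.mp hk, zero_add]
  have hw0 : w = 0 :=
    eq_zero_of_mem_sympOrth_of_forall_sympOrth hnd hsum hw fun v hv => by
      rw [← hiso w hw v hv, ← hℓ, h v]
  rwa [hw0, add_zero]

end

theorem stmt5_general {E E' : Type*}
    [NormedAddCommGroup E] [NormedSpace ℝ E]
    [NormedAddCommGroup E'] [NormedSpace ℝ E']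
    (ω : E →ₗ[ℝ] E →ₗ[ℝ] ℝ) (ω' : E' →ₗ[ℝ] E' →ₗ[ℝ] ℝ)
    (hnd : ∀ u : E, (∀ v : E, ω u v = 0) → u = 0)
    (ℓ : E →L[ℝ] E')
    (hiso : ∀ u ∈ sympOrth ω (LinearMap.ker (ℓ : E →ₗ[ℝ] E')), ∀ v ∈ sympOrth ω (LinearMap.ker (ℓ : E →ₗ[ℝ] E')),
      ω' (ℓ u) (ℓ v) = ω u v)
    (hsum : LinearMap.ker (ℓ : E →ₗ[ℝ] E') ⊔ sympOrth ω (LinearMap.ker (ℓ : E →ₗ[ℝ] E')) = ⊤) :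
    ∀ u : E, (∀ v : E, ω' (ℓ u) (ℓ v) = 0) ↔ u ∈ LinearMap.ker (ℓ : E →ₗ[ℝ] E') := fun u =>
  ⟨mem_ker_of_forall_pullback_eq_zero hnd (ℓ : E →ₗ[ℝ] E') ω' hiso hsum,
    fun hu v => by rw [show ℓ u = 0 from hu, map_zero, LinearMap.zero_apply]⟩

/-- If ℓ is a weak isometry between (E,ω) and (E',ω') with E = ker ℓ ⊕ (ker ℓ)^⊥,
then the kernel of the pullback form ℓ*ω' equals ker ℓ. -/
theorem stmt5 {E E' : Type*}
    [NormedAddCommGroup E] [NormedSpace ℝ E] [CompleteSpace E]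
    [NormedAddCommGroup E'] [NormedSpace ℝ E'] [CompleteSpace E']
    (ω : E →ₗ[ℝ] E →ₗ[ℝ] ℝ) (ω' : E' →ₗ[ℝ] E' →ₗ[ℝ] ℝ)
    (hskew : ∀ u v : E, ω u v = - ω v u)
    (hskew' : ∀ u v : E', ω' u v = - ω' v u)
    (hnd : ∀ u : E, (∀ v : E, ω u v = 0) → u = 0)
    (ℓ : E →L[ℝ] E') (hdense : DenseRange ℓ)
    (hker : LinearMap.ker (ℓ : E →ₗ[ℝ] E') ⊓ sympOrth ω (LinearMap.ker (ℓ : E →ₗ[ℝ] E')) = ⊥)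
    (hiso : ∀ u ∈ sympOrth ω (LinearMap.ker (ℓ : E →ₗ[ℝ] E')), ∀ v ∈ sympOrth ω (LinearMap.ker (ℓ : E →ₗ[ℝ] E')),
      ω' (ℓ u) (ℓ v) = ω u v)
    (hsum : LinearMap.ker (ℓ : E →ₗ[ℝ] E') ⊔ sympOrth ω (LinearMap.ker (ℓ : E →ₗ[ℝ] E')) = ⊤) :
    ∀ u : E, (∀ v : E, ω' (ℓ u) (ℓ v) = 0) ↔ u ∈ LinearMap.ker (ℓ : E →ₗ[ℝ] E') :=
  stmt5_general ω ω' hnd ℓ hiso hsum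
end

section
/- Let ℓ : E → E' be a linear map, ω a skew-symmetric bilinear form on E with E = ker ℓ ⊕ (ker ℓ)^⊥, and suppose the restriction of ℓ to (ker ℓ)^⊥ is a bijection onto E'. Then there exists a unique skew-symmetric bilinear form ω' on E' such that ω'(ℓ(u), ℓ(v)) = ω(u,v) for all u, v ∈ (ker ℓ)^⊥; moreover ω' is weakly non-degenerate if and only if the restriction of ω to (ker ℓ)^⊥ is non-degenerate. -/
/-- If E = ker ℓ ⊕ (ker ℓ)^⊥ and ℓ restricted to (ker ℓ)^⊥ is a bijection onto E',
then there is a unique skew-symmetric bilinear form ω' on E' with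
ω'(ℓu, ℓv) = ω(u,v) on (ker ℓ)^⊥; moreover any such ω' is weakly non-degenerate
iff the restriction of ω to (ker ℓ)^⊥ is non-degenerate. -/
theorem stmt8 {E E' : Type*} [AddCommGroup E] [Module ℝ E] [AddCommGroup E'] [Module ℝ E']
    (ω : E →ₗ[ℝ] E →ₗ[ℝ] ℝ) (hskew : ∀ u v : E, ω u v = - ω v u)
    (ℓ : E →ₗ[ℝ] E')
    (hcompl : IsCompl (LinearMap.ker ℓ) (sympOrth ω (LinearMap.ker ℓ)))
    (hbij : Function.Bijective (ℓ.domRestrict (sympOrth ω (LinearMap.ker ℓ)))) :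
    (∃! ω' : E' →ₗ[ℝ] E' →ₗ[ℝ] ℝ,
        (∀ u' v' : E', ω' u' v' = - ω' v' u') ∧
          ∀ u ∈ sympOrth ω (LinearMap.ker ℓ), ∀ v ∈ sympOrth ω (LinearMap.ker ℓ),
            ω' (ℓ u) (ℓ v) = ω u v) ∧
      ∀ ω' : E' →ₗ[ℝ] E' →ₗ[ℝ] ℝ,
        ((∀ u' v' : E', ω' u' v' = - ω' v' u') ∧
            ∀ u ∈ sympOrth ω (LinearMap.ker ℓ), ∀ v ∈ sympOrth ω (LinearMap.ker ℓ),
              ω' (ℓ u) (ℓ v) = ω u v) →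
          ((∀ u' : E', (∀ v' : E', ω' u' v' = 0) → u' = 0) ↔
            ∀ u ∈ sympOrth ω (LinearMap.ker ℓ),
              (∀ v ∈ sympOrth ω (LinearMap.ker ℓ), ω u v = 0) → u = 0) := by
  classical
  set K := sympOrth ω (LinearMap.ker ℓ) with hK
  set e : K ≃ₗ[ℝ] E' := LinearEquiv.ofBijective (ℓ.domRestrict K) hbij with he
  set f : E' →ₗ[ℝ] E := K.subtype ∘ₗ (e.symm : E' →ₗ[ℝ] K) with hf
  have hfe : ∀ u : K, f (ℓ u) = u := by
    intro u
    have : e u = ℓ u := rfl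
    simp [hf, ← this]
  have hef : ∀ u' : E', ℓ (f u') = u' := by
    intro u'
    have : ℓ (f u') = e (e.symm u') := rfl
    simp [this]
  have hfmem : ∀ u' : E', f u' ∈ K := fun u' => (e.symm u').2
  set ω' : E' →ₗ[ℝ] E' →ₗ[ℝ] ℝ := ω.compl₁₂ f f with hω'
  have hprop : (∀ u' v' : E', ω' u' v' = - ω' v' u') ∧
      ∀ u ∈ K, ∀ v ∈ K, ω' (ℓ u) (ℓ v) = ω u v := by
    constructor
    · intro u' v'; exact hskew _ _
    · intro u hu v hv
      simp only [hω', LinearMap.compl₁₂_apply]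
      rw [hfe ⟨u, hu⟩, hfe ⟨v, hv⟩]
  refine ⟨⟨ω', hprop, ?_⟩, ?_⟩
  · intro ω₂ ⟨_, h2⟩
    ext u' v'
    obtain ⟨u, hu⟩ := hbij.2 u'
    obtain ⟨v, hv⟩ := hbij.2 v'
    have hu' : ℓ (u : E) = u' := hu
    have hv' : ℓ (v : E) = v' := hv
    rw [← hu', ← hv', h2 u u.2 v v.2, hprop.2 u u.2 v v.2]
  · rintro ω₂ ⟨hsk2, h2⟩
    constructor
    · intro hnd u hu h0
      have hu0 : ℓ u = 0 := by
        apply hnd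
        intro v'
        obtain ⟨v, hv⟩ := hbij.2 v'
        have hv' : ℓ (v : E) = v' := hv
        rw [← hv', h2 u hu v v.2]
        exact h0 v v.2
      have : (⟨u, hu⟩ : K) = 0 := hbij.1 (by simpa using hu0)
      simpa using congrArg Subtype.val this
    · intro hnd u' h0
      obtain ⟨u, hu⟩ := hbij.2 u'
      have hu' : ℓ (u : E) = u' := hu
      have : (u : E) = 0 := by
        apply hnd u u.2
        intro v hv
        rw [← h2 u u.2 v hv, hu']
        exact h0 _
      rw [← hu', this, map_zero]
end

section
/- Let ℓ : E → E₁ and m : E → E₂ be linear maps with ker m ⊆ ker ℓ, and let ω be a skew-symmetric bilinear form on E with E = ker ℓ ⊕ (ker ℓ)^⊥ and E = ker m ⊕ (ker m)^⊥, such that the restrictions ℓ|_{(ker ℓ)^⊥} and m|_{(ker m)^⊥} are bijections onto E₁ and E₂. Let ω₁, ω₂ be the induced forms on E₁, E₂ (i.e., ωᵢ(pᵢ u, pᵢ v) = ω(u,v) on the respective orthogonals). If π : E₂ → E₁ is the unique linear map with π ∘ m = ℓ, then ω₂(u₂, v₂) restricted to m((ker ℓ)^⊥) equals ω₁(π u₂,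 π v₂); i.e., π*ω₁ = ω₂ on m((ker ℓ)^⊥). -/
theorem LinearMap.exists_mem_apply_eq_of_codisjoint_ker {R M N : Type*} [Semiring R]
    [AddCommMonoid M] [Module R M] [AddCommMonoid N] [Module R N] {f : M →ₗ[R] N}
    {K : Submodule R M} (h : Codisjoint (LinearMap.ker f) K) (x : M) :
    ∃ y ∈ K, f y = f x := by
  obtain ⟨x₀, y, hx₀, hy, rfl⟩ := Submodule.codisjoint_iff_exists_add_eq.mp h x
  exact ⟨y, hy, by simp [LinearMap.mem_ker.mp hx₀]⟩

section sympOrth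

variable {E : Type*} [AddCommGroup E] [Module ℝ E] (ω : E →ₗ[ℝ] E →ₗ[ℝ] ℝ)

theorem sympOrth_le {K L : Submodule ℝ E} (h : K ≤ L) : sympOrth ω L ≤ sympOrth ω K :=
  fun _ hx y hy => hx y (h hy)

theorem apply_eq_of_sub_mem_of_mem_sympOrth (hskew : ∀ u v : E, ω u v = - ω v u)
    {K : Submodule ℝ E} {u u' v v' : E} (hu : u - u' ∈ K) (hv : v - v' ∈ K)
    (hu' : u' ∈ sympOrth ω K) (hvK : v ∈ sympOrth ω K) :
    ω u v = ω u' v' := by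
  have h₁ : ω (u - u') v = 0 := by rw [hskew, hvK _ hu, neg_zero]
  have h₂ : ω u' (v - v') = 0 := hu' _ hv
  simp only [map_sub, LinearMap.sub_apply] at h₁ h₂
  linarith

end sympOrth

theorem stmt12_general {E E₁ E₂ : Type*}
    [AddCommGroup E] [Module ℝ E] [AddCommGroup E₁] [Module ℝ E₁]
    [AddCommGroup E₂] [Module ℝ E₂]
    (ω : E →ₗ[ℝ] E →ₗ[ℝ] ℝ) (hskew : ∀ u v : E, ω u v = - ω v u)
    (ℓ : E →ₗ[ℝ] E₁) (m : E →ₗ[ℝ] E₂)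
    (hker : LinearMap.ker m ≤ LinearMap.ker ℓ)
    (hcompl₂ : IsCompl (LinearMap.ker m) (sympOrth ω (LinearMap.ker m)))
    (ω₁ : E₁ →ₗ[ℝ] E₁ →ₗ[ℝ] ℝ) (ω₂ : E₂ →ₗ[ℝ] E₂ →ₗ[ℝ] ℝ)
    (hω₁ : ∀ u ∈ sympOrth ω (LinearMap.ker ℓ), ∀ v ∈ sympOrth ω (LinearMap.ker ℓ),
      ω₁ (ℓ u) (ℓ v) = ω u v)
    (hω₂ : ∀ u ∈ sympOrth ω (LinearMap.ker m), ∀ v ∈ sympOrth ω (LinearMap.ker m),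
      ω₂ (m u) (m v) = ω u v)
    (π : E₂ →ₗ[ℝ] E₁) (hπ : π.comp m = ℓ) :
    ∀ u ∈ sympOrth ω (LinearMap.ker ℓ), ∀ v ∈ sympOrth ω (LinearMap.ker ℓ),
      ω₂ (m u) (m v) = ω₁ (π (m u)) (π (m v)) := by
  intro u hu v hv
  obtain ⟨u', hu', hmu⟩ := LinearMap.exists_mem_apply_eq_of_codisjoint_ker hcompl₂.codisjoint u
  obtain ⟨v', hv', hmv⟩ := LinearMap.exists_mem_apply_eq_of_codisjoint_ker hcompl₂.codisjoint v
  have hπm (x : E) : π (m x) = ℓ x := LinearMap.congr_fun hπ x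
  calc ω₂ (m u) (m v) = ω₂ (m u') (m v') := by rw [hmu, hmv]
    _ = ω u' v' := hω₂ u' hu' v' hv'
    _ = ω u v := (apply_eq_of_sub_mem_of_mem_sympOrth ω hskew
          (LinearMap.sub_mem_ker_iff.mpr hmu.symm) (LinearMap.sub_mem_ker_iff.mpr hmv.symm)
          hu' (sympOrth_le ω hker hv)).symm
    _ = ω₁ (ℓ u) (ℓ v) := (hω₁ u hu v hv).symm
    _ = ω₁ (π (m u)) (π (m v)) := by rw [hπm, hπm]

/-- Compatibility of induced forms: if ker m ⊆ ker ℓ, ω₁ and ω₂ are the forms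
induced by ω via ℓ and m on E₁ and E₂, and π is the unique map with π ∘ m = ℓ,
then π*ω₁ = ω₂ on m((ker ℓ)^⊥). -/
theorem stmt12 {E E₁ E₂ : Type*}
    [AddCommGroup E] [Module ℝ E] [AddCommGroup E₁] [Module ℝ E₁]
    [AddCommGroup E₂] [Module ℝ E₂]
    (ω : E →ₗ[ℝ] E →ₗ[ℝ] ℝ) (hskew : ∀ u v : E, ω u v = - ω v u)
    (ℓ : E →ₗ[ℝ] E₁) (m : E →ₗ[ℝ] E₂)
    (hker : LinearMap.ker m ≤ LinearMap.ker ℓ)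
    (hcompl₁ : IsCompl (LinearMap.ker ℓ) (sympOrth ω (LinearMap.ker ℓ)))
    (hcompl₂ : IsCompl (LinearMap.ker m) (sympOrth ω (LinearMap.ker m)))
    (hbij₁ : Function.Bijective (ℓ.domRestrict (sympOrth ω (LinearMap.ker ℓ))))
    (hbij₂ : Function.Bijective (m.domRestrict (sympOrth ω (LinearMap.ker m))))
    (ω₁ : E₁ →ₗ[ℝ] E₁ →ₗ[ℝ] ℝ) (ω₂ : E₂ →ₗ[ℝ] E₂ →ₗ[ℝ] ℝ)
    (hω₁ : ∀ u ∈ sympOrth ω (LinearMap.ker ℓ), ∀ v ∈ sympOrth ω (LinearMap.ker ℓ),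
      ω₁ (ℓ u) (ℓ v) = ω u v)
    (hω₂ : ∀ u ∈ sympOrth ω (LinearMap.ker m), ∀ v ∈ sympOrth ω (LinearMap.ker m),
      ω₂ (m u) (m v) = ω u v)
    (π : E₂ →ₗ[ℝ] E₁) (hπ : π.comp m = ℓ) :
    ∀ u ∈ sympOrth ω (LinearMap.ker ℓ), ∀ v ∈ sympOrth ω (LinearMap.ker ℓ),
      ω₂ (m u) (m v) = ω₁ (π (m u)) (π (m v)) :=
  stmt12_general ω hskew ℓ m hker hcompl₂ ω₁ ω₂ hω₁ hω₂ π hπ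
end

section
/- Let H be a Hilbert space and g a weak Riemannian metric on H given by g_x(e,f) = ⟨A_x e, f⟩ where A_x = ‖x-a‖² Id + S as above. The associated map g_x♭ : H → H* is surjective if and only if x ≠ a; consequently the weak symplectic form ω on TH = H × H defined via the block operator ω♭_{(x,e)} = ½ [[Γ_{(x,e)}, -g_x♭],[g_x♭, 0]] (for any bounded operator Γ_{(x,e)}) is strongly non-degenerate at (x,e) if and only if x ≠ a. -/
open scoped RealInnerProductSpace

/-! With `c = ‖x - a‖²`, the form `⟪(c • 1 + S) u, v⟫` is coercive when `c > 0`, so by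
Lax–Milgram `g_x♭` is an isomorphism onto the dual. When `c = 0`, `g_x♭` is the Riesz map composed
with `S`, which is not surjective. In the block operator, the second row `g_x♭ p.1` determines `p.1`,
and then the first row determines `p.2`, so the block operator is bijective exactly when `g_x♭` is. -/

open Function

theorem bijective_fromBlocks_neg_zero_iff {E F : Type*} [AddCommGroup F] (Γ L : E → F) :
    Bijective (fun p : E × E => (Γ p.1 - L p.2, L p.1)) ↔ Bijective L := by
  constructor
  · intro hblock
    have hsurj : Surjective L := fun y =>
      ⟨_, congrArg Prod.snd (hblock.surjective (0, y)).choose_spec⟩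
    refine ⟨fun u v huv => ?_, hsurj⟩
    obtain ⟨w, hw⟩ := hsurj (Γ v - Γ u + L u)
    have huw : ((u, u) : E × E) = (v, w) :=
      hblock.injective (by simp only [hw, huv, Prod.mk.injEq, and_true]; abel)
    exact congrArg Prod.fst huw
  · intro hL
    refine ⟨fun p q hpq => ?_, fun y => ?_⟩
    · simp only [Prod.mk.injEq] at hpq
      have h1 : p.1 = q.1 := hL.injective hpq.2
      rw [h1, sub_right_inj] at hpq
      exact Prod.ext h1 (hL.injective hpq.1)
    · obtain ⟨u, hu⟩ := hL.surjective y.2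
      obtain ⟨v, hv⟩ := hL.surjective (Γ u - y.1)
      exact ⟨(u, v), by simp [hu, hv]⟩

section CoerciveShift

variable {H : Type*} [NormedAddCommGroup H] [InnerProductSpace ℝ H]

theorem isCoercive_innerSL_comp_smul_id_add {T : H →L[ℝ] H} (hT : ∀ u, 0 ≤ ⟪T u, u⟫) {c : ℝ}
    (hc : 0 < c) : IsCoercive ((innerSL ℝ).comp (c • ContinuousLinearMap.id ℝ H + T)) := by
  refine ⟨c, hc, fun u => ?_⟩
  have hB : (innerSL ℝ).comp (c • ContinuousLinearMap.id ℝ H + T) u u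
      = c * ‖u‖ * ‖u‖ + ⟪T u, u⟫ := by
    simp [sq, mul_assoc]
  linarith [hT u]

variable [CompleteSpace H]

theorem bijective_smul_id_add_of_pos {T : H →L[ℝ] H} (hT : ∀ u, 0 ≤ ⟪T u, u⟫) {c : ℝ}
    (hc : 0 < c) : Bijective fun e : H => c • e + T e := by
  let e := (isCoercive_innerSL_comp_smul_id_add hT hc).continuousLinearEquivOfBilin
  convert e.bijective with u
  refine ext_inner_right ℝ fun w => ?_
  simp only [e, IsCoercive.continuousLinearEquivOfBilin_apply]
  rfl

theorem surjective_toDual_smul_add_iff {T : H →L[ℝ] H} (hT : ∀ u, 0 ≤ ⟪T u, u⟫)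
    (hproper : Set.range T ≠ Set.univ) {c : ℝ} (hc : 0 ≤ c) :
    Surjective (fun e : H => InnerProductSpace.toDual ℝ H (c • e + T e)) ↔ 0 < c := by
  refine ⟨fun hsurj => hc.lt_of_ne fun hc0 => hproper ?_, fun hc => ?_⟩
  · subst hc0
    exact Set.range_eq_univ.2 <| (EquivLike.comp_surjective T (InnerProductSpace.toDual ℝ H)).1
      (by simpa [comp_def] using hsurj)
  · exact (InnerProductSpace.toDual ℝ H).surjective.comp
      (bijective_smul_id_add_of_pos hT hc).surjective

theorem bijective_toDual_smul_add_iff {T : H →L[ℝ] H} (hT : ∀ u, 0 ≤ ⟪T u, u⟫)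
    (hproper : Set.range T ≠ Set.univ) {c : ℝ} (hc : 0 ≤ c) :
    Bijective (fun e : H => InnerProductSpace.toDual ℝ H (c • e + T e)) ↔ 0 < c :=
  ⟨fun h => (surjective_toDual_smul_add_iff hT hproper hc).1 h.2,
    fun hc => (InnerProductSpace.toDual ℝ H).bijective.comp (bijective_smul_id_add_of_pos hT hc)⟩

end CoerciveShift

theorem stmt17_general {H : Type*} [NormedAddCommGroup H] [InnerProductSpace ℝ H] [CompleteSpace H]
    (S : H →L[ℝ] H)
    (hpos : ∀ u : H, u ≠ 0 → 0 < ⟪S u, u⟫)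
    (hproper : Set.range (⇑S) ≠ Set.univ)
    (a : H) :
    (∀ x : H,
      (Function.Surjective fun e : H =>
          InnerProductSpace.toDual ℝ H (‖x - a‖ ^ 2 • e + S e)) ↔ x ≠ a) ∧
      ∀ (Γ : H →L[ℝ] H) (x : H),
        (Function.Bijective fun p : H × H =>
            (((1 : ℝ) / 2) • (InnerProductSpace.toDual ℝ H (Γ p.1) -
                InnerProductSpace.toDual ℝ H (‖x - a‖ ^ 2 • p.2 + S p.2)),
              ((1 : ℝ) / 2) • InnerProductSpace.toDual ℝ H (‖x - a‖ ^ 2 • p.1 + S p.1))) ↔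
          x ≠ a := by
  have hS : ∀ u, 0 ≤ ⟪S u, u⟫ := fun u =>
    (eq_or_ne u 0).elim (fun hu => by simp [hu]) fun hu => (hpos u hu).le
  have hdist : ∀ x, 0 < ‖x - a‖ ^ 2 ↔ x ≠ a := by simp [sq_pos_iff, sub_eq_zero]
  refine ⟨fun x => (surjective_toDual_smul_add_iff hS hproper (sq_nonneg _)).trans (hdist x),
    fun Γ x => ?_⟩
  rw [← hdist, ← bijective_toDual_smul_add_iff hS hproper (sq_nonneg _),
    ← bijective_fromBlocks_neg_zero_iff fun e => InnerProductSpace.toDual ℝ H (Γ e)]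
  simp_rw [← Prod.smul_mk]
  exact (IsUnit.smul_bijective (by norm_num : IsUnit ((1 : ℝ) / 2))).of_comp_iff' _

/-- With A_x = ‖x-a‖²·Id + S as above and g_x♭ : H → H* given by
e ↦ ⟪A_x e, ·⟫, the map g_x♭ is surjective iff x ≠ a; and for any bounded Γ the
block operator ½[[Γ, -g_x♭],[g_x♭, 0]] on H × H, viewed as a map into
H* × H*, is bijective (i.e. the associated weak symplectic form is strongly
non-degenerate at (x,e)) iff x ≠ a. -/
theorem stmt17 {H : Type*} [NormedAddCommGroup H] [InnerProductSpace ℝ H] [CompleteSpace H]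
    (S : H →L[ℝ] H)
    (hcpt : IsCompactOperator (⇑S))
    (hsa : ∀ u v : H, ⟪S u, v⟫ = ⟪u, S v⟫)
    (hpos : ∀ u : H, u ≠ 0 → 0 < ⟪S u, u⟫)
    (hdense : DenseRange (⇑S))
    (hproper : Set.range (⇑S) ≠ Set.univ)
    (a : H) :
    (∀ x : H,
      (Function.Surjective fun e : H =>
          InnerProductSpace.toDual ℝ H (‖x - a‖ ^ 2 • e + S e)) ↔ x ≠ a) ∧
      ∀ (Γ : H →L[ℝ] H) (x : H),
        (Function.Bijective fun p : H × H =>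
            (((1 : ℝ) / 2) • (InnerProductSpace.toDual ℝ H (Γ p.1) -
                InnerProductSpace.toDual ℝ H (‖x - a‖ ^ 2 • p.2 + S p.2)),
              ((1 : ℝ) / 2) • InnerProductSpace.toDual ℝ H (‖x - a‖ ^ 2 • p.1 + S p.1))) ↔
          x ≠ a :=
  stmt17_general S hpos hproper a
end
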